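/- arXiv:1301.4272 — 2 statements merged into one kernel-verified Lean document; each statement's English description precedes it below -/
import Mathlib

section
/- ΦΨ-completeness of approximate view-based propagators: let c ⊆ (Fin k → ℤ) be a constraint, f : (Fin n → ℤ) → (Fin k → ℤ) a function, and let Φ, Ψ : Set (Fin n → ℤ) → Set (Fin n → ℤ) be closure operators (extensive, monotone, idempotent). Then for every tuple set S ⊆ (Fin n → ℤ), the ΦΨ view-based propagator output Ψ(f⁻¹(c ∩ f '' (Φ S)) ∩ Φ S) ∩ S is contained in Ψ(f⁻¹(c) ∩ Φ S); that is, the propagator is ΦΨ-complete for the composed constraint c∘f with solution set f⁻¹(c). -/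
theorem viewProp_phiPsi_complete_general {n k : ℕ} (c : Set (Fin k → ℤ))
    (f : (Fin n → ℤ) → (Fin k → ℤ))
    (Φ Ψ : Set (Fin n → ℤ) → Set (Fin n → ℤ))
    (hΨmono : ∀ S T, S ⊆ T → Ψ S ⊆ Ψ T) :
    ∀ S : Set (Fin n → ℤ),
      Ψ (f ⁻¹' (c ∩ f '' Φ S) ∩ Φ S) ∩ S ⊆ Ψ (f ⁻¹' c ∩ Φ S) := fun _ =>
  Set.inter_subset_left.trans <| hΨmono _ _ <|
    Set.inter_subset_inter_left _ <| Set.preimage_mono Set.inter_subset_left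

theorem viewProp_phiPsi_complete {n k : ℕ} (c : Set (Fin k → ℤ))
    (f : (Fin n → ℤ) → (Fin k → ℤ))
    (Φ Ψ : Set (Fin n → ℤ) → Set (Fin n → ℤ))
    (hΦext : ∀ S, S ⊆ Φ S) (hΦmono : ∀ S T, S ⊆ T → Φ S ⊆ Φ T)
    (hΦidem : ∀ S, Φ (Φ S) = Φ S)
    (hΨext : ∀ S, S ⊆ Ψ S) (hΨmono : ∀ S T, S ⊆ T → Ψ S ⊆ Ψ T)
    (hΨidem : ∀ S, Ψ (Ψ S) = Ψ S) :
    ∀ S : Set (Fin n → ℤ),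
      Ψ (f ⁻¹' (c ∩ f '' Φ S) ∩ Φ S) ∩ S ⊆ Ψ (f ⁻¹' c ∩ Φ S) :=
  viewProp_phiPsi_complete_general c f Φ Ψ hΨmono
end

section
/- Soundness of approximate view-based propagators: let c ⊆ (Fin k → ℤ) be a constraint, f : (Fin n → ℤ) → (Fin k → ℤ) a function, and let Φ, Ψ : Set (Fin n → ℤ) → Set (Fin n → ℤ) be extensive and monotone operators (S ⊆ Φ S, S ⊆ Ψ S, and both preserve ⊆). Then for every tuple set S ⊆ (Fin n → ℤ), the solutions of the composed constraint in S are never removed: f⁻¹(c) ∩ S ⊆ Ψ(f⁻¹(c ∩ f '' (Φ S)) ∩ Φ S) ∩ S. Moreover the propagator is contracting: Ψ(f⁻¹(c ∩ f '' (Φ S)) ∩ Φ S) ∩ S ⊆ S. -/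
section ViewPropagator

variable {α β : Type*}

def viewProp (c : Set β) (f : α → β) (Φ Ψ : Set α → Set α) (S : Set α) : Set α :=
  Ψ (f ⁻¹' (c ∩ f '' Φ S) ∩ Φ S) ∩ S

theorem preimage_inter_subset_preimage_inter_image (c : Set β) (f : α → β) (T : Set α) :
    f ⁻¹' c ∩ T ⊆ f ⁻¹' (c ∩ f '' T) ∩ T :=
  fun _ hx => ⟨⟨hx.1, Set.mem_image_of_mem f hx.2⟩, hx.2⟩

theorem viewProp_subset (c : Set β) (f : α → β) (Φ Ψ : Set α → Set α) (S : Set α) :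
    viewProp c f Φ Ψ S ⊆ S :=
  Set.inter_subset_right

theorem preimage_inter_subset_viewProp (c : Set β) (f : α → β) {Φ Ψ : Set α → Set α}
    (hΦ : ∀ S, S ⊆ Φ S) (hΨ : ∀ S, S ⊆ Ψ S) (S : Set α) :
    f ⁻¹' c ∩ S ⊆ viewProp c f Φ Ψ S := by
  have hsol : f ⁻¹' c ∩ S ⊆ f ⁻¹' c ∩ Φ S := Set.inter_subset_inter_right _ (hΦ S)
  have hview := preimage_inter_subset_preimage_inter_image c f (Φ S)
  exact Set.subset_inter ((hsol.trans hview).trans (hΨ _)) Set.inter_subset_right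

end ViewPropagator

theorem viewProp_sound_contracting_general {n k : ℕ} (c : Set (Fin k → ℤ))
    (f : (Fin n → ℤ) → (Fin k → ℤ))
    (Φ Ψ : Set (Fin n → ℤ) → Set (Fin n → ℤ))
    (hΦext : ∀ S, S ⊆ Φ S)
    (hΨext : ∀ S, S ⊆ Ψ S) :
    ∀ S : Set (Fin n → ℤ),
      (f ⁻¹' c ∩ S ⊆ Ψ (f ⁻¹' (c ∩ f '' Φ S) ∩ Φ S) ∩ S) ∧
      (Ψ (f ⁻¹' (c ∩ f '' Φ S) ∩ Φ S) ∩ S ⊆ S) := fun S =>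
  ⟨preimage_inter_subset_viewProp c f hΦext hΨext S, viewProp_subset c f Φ Ψ S⟩

theorem viewProp_sound_contracting {n k : ℕ} (c : Set (Fin k → ℤ))
    (f : (Fin n → ℤ) → (Fin k → ℤ))
    (Φ Ψ : Set (Fin n → ℤ) → Set (Fin n → ℤ))
    (hΦext : ∀ S, S ⊆ Φ S) (hΦmono : ∀ S T, S ⊆ T → Φ S ⊆ Φ T)
    (hΨext : ∀ S, S ⊆ Ψ S) (hΨmono : ∀ S T, S ⊆ T → Ψ S ⊆ Ψ T) :
    ∀ S : Set (Fin n → ℤ),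
      (f ⁻¹' c ∩ S ⊆ Ψ (f ⁻¹' (c ∩ f '' Φ S) ∩ Φ S) ∩ S) ∧
      (Ψ (f ⁻¹' (c ∩ f '' Φ S) ∩ Φ S) ∩ S ⊆ S) :=
  viewProp_sound_contracting_general c f Φ Ψ hΦext hΨext
end
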